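/- arXiv:1608.07640 — 3 statements merged into one kernel-verified Lean document; each statement's English description precedes it below -/
import Mathlib

section
/- For each integer $n \ge 1$ and each sufficiently large real number $N$, there exists a measurable set $S \subset [0,1]^n$ with Lebesgue measure $|S| \ge 3/4$ such that for every $(y_1,\ldots,y_n) \in S$ there exists an integer $p$ with $4^{-n-1}N \le p \le N+2$ satisfying $\max_{1\le i\le n} \|p y_i\| \le N^{-1/n}$. -/
/-!
Work on the torus `(ℝ/ℤ)ⁿ` with its sup norm, where `‖p • x‖ ≤ δ` says that every coordinate
of `p x` is within `δ` of an integer. Dirichlet's principle is then a pigeonhole argument: once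
`(M + 1) δⁿ > 1`, two of the balls of radius `δ/2` around `k • x`, `0 ≤ k ≤ M`, meet, which
gives some `1 ≤ p ≤ M` with `‖p • x‖ ≤ δ`; for `δ = N^(-1/n)` one may take `M = ⌊N⌋`.
Since `x ↦ p • x` preserves Haar measure, `‖p • x‖ ≤ δ` holds on a set of measure at most
`(2δ)ⁿ = 2ⁿ/N`, so the points admitting a denominator `p ≤ 4^(-n-1) N` form a set of measure
at most `2ⁿ 4^(-n-1) ≤ 1/4`. The covering map `(0,1]ⁿ → (ℝ/ℤ)ⁿ` is measure preserving, so
the points of `(0,1]ⁿ` outside the preimage of that set have measure at least `3/4`, and for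
them every Dirichlet denominator is large.
-/

open MeasureTheory Metric Set
open scoped ENNReal

section Torus

variable {ι : Type*} [Fintype ι]

lemma volume_univ_unitAddTorus : volume (univ : Set (UnitAddTorus ι)) = 1 := by
  rw [← pi_univ, volume_pi_pi]
  simp [AddCircle.measure_univ]

lemma volume_closedBall_unitAddTorus (x : UnitAddTorus ι) {r : ℝ} (hr : 0 ≤ r) :
    volume (closedBall x r) = ENNReal.ofReal (min 1 (2 * r)) ^ Fintype.card ι := by
  simp [volume_pi_closedBall x hr, AddCircle.volume_closedBall]

lemma measurePreserving_coe_unitAddTorus :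
    MeasurePreserving (fun (y : ι → ℝ) i => (y i : UnitAddCircle))
      (volume.restrict (univ.pi fun _ => Ioc 0 1)) volume := by
  rw [volume_pi, Measure.restrict_pi_pi]
  exact measurePreserving_pi _ _ fun _ => by simpa using UnitAddCircle.measurePreserving_mk 0

lemma volume_pi_Ioc_diff_preimage {T : Set (UnitAddTorus ι)} (hT : MeasurableSet T) :
    volume (univ.pi (fun _ => Ioc (0 : ℝ) 1) \ (fun y i => (y i : UnitAddCircle)) ⁻¹' T) =
      volume Tᶜ := by
  have hpres := measurePreserving_coe_unitAddTorus (ι := ι)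
  rw [sdiff_eq, inter_comm, ← preimage_compl,
    ← Measure.restrict_apply (hT.compl.preimage hpres.measurable),
    hpres.measure_preimage hT.compl.nullMeasurableSet]

lemma volume_setOf_norm_nsmul_le {p : ℕ} (hp : p ≠ 0) {δ : ℝ} (hδ : 0 ≤ δ) :
    volume {x : UnitAddTorus ι | ‖p • x‖ ≤ δ} =
      ENNReal.ofReal (min 1 (2 * δ)) ^ Fintype.card ι := by
  have hpres := Measure.measurePreserving_zsmul (volume : Measure (UnitAddTorus ι))
    (Int.natCast_ne_zero.2 hp)
  have : {x : UnitAddTorus ι | ‖p • x‖ ≤ δ} = (fun x => (p : ℤ) • x) ⁻¹' closedBall 0 δ := by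
    ext x; simp
  rw [this, hpres.measure_preimage measurableSet_closedBall.nullMeasurableSet,
    volume_closedBall_unitAddTorus 0 hδ]

theorem exists_nsmul_norm_le (x : UnitAddTorus ι) {δ : ℝ} (hδ0 : 0 ≤ δ) (hδ1 : δ ≤ 1) {M : ℕ}
    (hM : 1 < (M + 1) * δ ^ Fintype.card ι) : ∃ p ∈ Finset.Icc 1 M, ‖p • x‖ ≤ δ := by
  have hsum : volume (univ : Set (UnitAddTorus ι)) <
      ∑ k ∈ Finset.range (M + 1), volume (closedBall (k • x) (δ / 2)) := by
    have hball (y : UnitAddTorus ι) :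
        volume (closedBall y (δ / 2)) = ENNReal.ofReal (δ ^ Fintype.card ι) := by
      rw [volume_closedBall_unitAddTorus y (by positivity), mul_div_cancel₀ _ two_ne_zero,
        min_eq_right hδ1, ENNReal.ofReal_pow hδ0]
    rw [volume_univ_unitAddTorus, Finset.sum_congr rfl fun k _ => hball (k • x),
      Finset.sum_const, Finset.card_range, nsmul_eq_mul, ← ENNReal.ofReal_natCast,
      ← ENNReal.ofReal_mul (by positivity), ← ENNReal.ofReal_one]
    exact (ENNReal.ofReal_lt_ofReal_iff_of_nonneg zero_le_one).2 (by exact_mod_cast hM)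
  obtain ⟨i, hi, j, hj, hij, z, hzi, hzj⟩ := exists_nonempty_inter_of_measure_univ_lt_sum_measure
    volume (fun k _ => measurableSet_closedBall.nullMeasurableSet) hsum
  wlog hlt : i < j generalizing i j
  · exact this j hj i hi hij.symm hzj hzi (lt_of_le_of_ne (not_lt.1 hlt) hij.symm)
  refine ⟨j - i, Finset.mem_Icc.2 ⟨by omega, by simp at hj; omega⟩, ?_⟩
  calc ‖(j - i) • x‖ = dist (j • x) (i • x) := by
        rw [dist_eq_norm, sub_nsmul x hlt.le, sub_eq_add_neg]
    _ ≤ dist (j • x) z + dist z (i • x) := dist_triangle _ _ _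
    _ ≤ δ / 2 + δ / 2 := add_le_add (by rw [dist_comm]; exact hzj) hzi
    _ = δ := add_halves δ

lemma exists_int_abs_mul_sub_le_of_norm_nsmul_le {y : ι → ℝ} {p : ℕ} {δ : ℝ}
    (h : ‖p • (fun i => (y i : UnitAddCircle))‖ ≤ δ) (i : ι) : ∃ k : ℤ, |p * y i - k| ≤ δ := by
  refine ⟨round (p * y i), ?_⟩
  have := (norm_le_pi_norm (p • fun i => (y i : UnitAddCircle)) i).trans h
  rwa [Pi.smul_apply, ← AddCircle.coe_nsmul, nsmul_eq_mul, UnitAddCircle.norm_eq] at this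

variable (ι) in
def smallDenominatorSet (P : ℕ) (δ : ℝ) : Set (UnitAddTorus ι) :=
  ⋃ p ∈ Finset.Icc 1 P, {x | ‖p • x‖ ≤ δ}

lemma measurableSet_smallDenominatorSet (P : ℕ) (δ : ℝ) :
    MeasurableSet (smallDenominatorSet ι P δ) :=
  Finset.measurableSet_biUnion _ fun _ _ =>
    measurableSet_le ((continuous_const_smul _).norm.measurable) measurable_const

lemma volume_smallDenominatorSet_le (P : ℕ) {δ : ℝ} (hδ : 0 ≤ δ) :
    volume (smallDenominatorSet ι P δ) ≤ ENNReal.ofReal (P * (2 * δ) ^ Fintype.card ι) := by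
  calc volume (smallDenominatorSet ι P δ)
      ≤ ∑ p ∈ Finset.Icc 1 P, volume {x : UnitAddTorus ι | ‖p • x‖ ≤ δ} :=
        measure_biUnion_finset_le _ _
    _ ≤ ∑ p ∈ Finset.Icc 1 P, ENNReal.ofReal ((2 * δ) ^ Fintype.card ι) := by
        refine Finset.sum_le_sum fun p hp => ?_
        rw [volume_setOf_norm_nsmul_le (by simp at hp; omega) hδ,
          ENNReal.ofReal_pow (by positivity)]
        gcongr
        exact min_le_right _ _
    _ = ENNReal.ofReal (P * (2 * δ) ^ Fintype.card ι) := by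
        rw [Finset.sum_const, Nat.card_Icc, nsmul_eq_mul, ENNReal.ofReal_mul (by positivity),
          ENNReal.ofReal_natCast, Nat.add_sub_cancel]

end Torus

lemma rpow_neg_one_div_natCast_pow {N : ℝ} (hN : 0 ≤ N) {n : ℕ} (hn : n ≠ 0) :
    (N ^ (-(1 : ℝ) / n)) ^ n = N⁻¹ := by
  rw [← Real.rpow_mul_natCast hN, div_mul_cancel₀ _ (Nat.cast_ne_zero.2 hn), Real.rpow_neg_one]

lemma floor_mul_two_mul_rpow_pow_le_quarter {n : ℕ} (hn : n ≠ 0) {N : ℝ} (hN : 0 < N) :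
    (⌊(4 : ℝ) ^ (-(n : ℝ) - 1) * N⌋₊ : ℝ) * (2 * N ^ (-(1 : ℝ) / n)) ^ n ≤ 1 / 4 := by
  have h4 : (4 : ℝ) ^ (-(n : ℝ) - 1) * 2 ^ n ≤ 1 / 4 := by
    have h24 : (2 : ℝ) ^ n ≤ 4 ^ n := pow_le_pow_left₀ (by norm_num) (by norm_num) n
    rw [Real.rpow_sub (by norm_num), Real.rpow_neg (by norm_num), Real.rpow_natCast,
      Real.rpow_one]
    field_simp
    linarith
  calc (⌊(4 : ℝ) ^ (-(n : ℝ) - 1) * N⌋₊ : ℝ) * (2 * N ^ (-(1 : ℝ) / n)) ^ n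
      ≤ 4 ^ (-(n : ℝ) - 1) * N * (2 ^ n * N⁻¹) := by
        rw [mul_pow, rpow_neg_one_div_natCast_pow hN.le hn]
        gcongr
        exact Nat.floor_le (by positivity)
    _ = 4 ^ (-(n : ℝ) - 1) * 2 ^ n := by field_simp
    _ ≤ 1 / 4 := h4

lemma three_quarters_le_volume_compl_smallDenominatorSet {n : ℕ} (hn : n ≠ 0) {N : ℝ}
    (hN : 0 < N) : 3 / 4 ≤ volume
      (smallDenominatorSet (Fin n) ⌊(4 : ℝ) ^ (-(n : ℝ) - 1) * N⌋₊ (N ^ (-(1 : ℝ) / n)))ᶜ := by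
  have hquarter : volume (smallDenominatorSet (Fin n) ⌊(4 : ℝ) ^ (-(n : ℝ) - 1) * N⌋₊
      (N ^ (-(1 : ℝ) / n))) ≤ 1 / 4 := by
    refine (volume_smallDenominatorSet_le _ (by positivity)).trans ?_
    rw [Fintype.card_fin, ← ENNReal.ofReal_one, ← ENNReal.ofReal_ofNat 4,
      ← ENNReal.ofReal_div_of_pos (by norm_num)]
    exact ENNReal.ofReal_le_ofReal (floor_mul_two_mul_rpow_pow_le_quarter hn hN)
  rw [measure_compl (measurableSet_smallDenominatorSet _ _) (measure_ne_top _ _),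
    volume_univ_unitAddTorus]
  refine ENNReal.le_sub_of_add_le_left (ne_top_of_le_ne_top (by simp) hquarter) ?_
  calc _ ≤ (1 / 4 : ℝ≥0∞) + 3 / 4 := by gcongr
    _ = 1 := by rw [ENNReal.div_add_div_same, ENNReal.div_eq_one_iff] <;> norm_num

/-- Quantitative Dirichlet principle: for large `N` there is a set
`S ⊆ [0,1]^n` of measure at least `3/4` such that every `y ∈ S` admits an
integer `p ∈ [4^{-n-1}N, N+2]` with `max_i ‖p yᵢ‖ ≤ N^{-1/n}`. -/
theorem dirichlet_large_denominator (n : ℕ) (hn : 1 ≤ n) :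
    ∃ N₀ : ℝ, ∀ N : ℝ, N₀ ≤ N →
      ∃ S : Set (Fin n → ℝ), MeasurableSet S ∧
        S ⊆ {y | ∀ i, y i ∈ Set.Icc (0 : ℝ) 1} ∧
        3 / 4 ≤ MeasureTheory.volume S ∧
        ∀ y ∈ S, ∃ p : ℤ, 4 ^ (-(n : ℝ) - 1) * N ≤ (p : ℝ) ∧ (p : ℝ) ≤ N + 2 ∧
          ∀ i, ∃ k : ℤ, |(p : ℝ) * y i - (k : ℝ)| ≤ N ^ (-(1 : ℝ) / n) := by
  refine ⟨1, fun N hN => ?_⟩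
  have hN0 : 0 < N := one_pos.trans_le hN
  set δ := N ^ (-(1 : ℝ) / n)
  set P := ⌊(4 : ℝ) ^ (-(n : ℝ) - 1) * N⌋₊
  have hT := measurableSet_smallDenominatorSet (ι := Fin n) P δ
  refine ⟨univ.pi (fun _ => Ioc 0 1) \ _ ⁻¹' smallDenominatorSet (Fin n) P δ,
    (MeasurableSet.univ_pi fun _ => measurableSet_Ioc).diff
      (hT.preimage measurePreserving_coe_unitAddTorus.measurable),
    fun y hy i => Ioc_subset_Icc_self (hy.1 i trivial), ?_, ?_⟩
  · rw [volume_pi_Ioc_diff_preimage hT]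
    exact three_quarters_le_volume_compl_smallDenominatorSet (by omega) hN0
  rintro y ⟨-, hyT⟩
  have hδ1 : δ ≤ 1 := Real.rpow_le_one_of_one_le_of_nonpos hN
    (div_nonpos_of_nonpos_of_nonneg (by norm_num) n.cast_nonneg)
  have hM : 1 < ((⌊N⌋₊ : ℝ) + 1) * δ ^ Fintype.card (Fin n) := by
    rw [Fintype.card_fin, rpow_neg_one_div_natCast_pow hN0.le (by omega), ← div_eq_mul_inv,
      one_lt_div hN0]
    exact Nat.lt_floor_add_one N
  obtain ⟨p, hp, hpy⟩ :=
    exists_nsmul_norm_le (fun i => (y i : UnitAddCircle)) (by positivity) hδ1 hM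
  have hPp : P < p := by
    by_contra! hpP
    exact hyT (mem_biUnion (Finset.mem_Icc.2 ⟨(Finset.mem_Icc.1 hp).1, hpP⟩) hpy)
  refine ⟨p, ?_, ?_, by exact_mod_cast exists_int_abs_mul_sub_le_of_norm_nsmul_le hpy⟩
  · calc 4 ^ (-(n : ℝ) - 1) * N ≤ P + 1 := (Nat.lt_floor_add_one _).le
      _ ≤ ((p : ℤ) : ℝ) := by exact_mod_cast hPp
  · calc ((p : ℤ) : ℝ) ≤ ⌊N⌋₊ := by exact_mod_cast (Finset.mem_Icc.1 hp).2
      _ ≤ N + 2 := by linarith [Nat.floor_le hN0.le]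
end

section
/- Fix $n \ge 1$, $0 < \sigma < \frac{1}{n+2}$, and $\epsilon_2 > 0$. For all sufficiently large $R$ such that $R^{\sigma}$ is a positive integer, the set $V = \{ x \in [0,1]^n : \exists\, k \in \mathbb{Z}^n, \exists\, p \in \mathbb{Z},\ 4^{-n-1} R^{1-2\sigma} \le p \le R^{1-2\sigma},\ \max_{1\le i\le n} |x_i - R^{-\sigma} k_i / p| \le \epsilon_2 / R \}$ has Lebesgue measure $|V| \ge 3/4$. -/
/-!
Scaling by the integer `a = R^σ`, the condition asks for `p ∈ [Q/4^(n+1), Q]`, `Q = R^(1-2σ)`,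
with `|p a xᵢ - kᵢ| ≤ ε₂ p a / R` for all `i`. Dirichlet's principle with `M = ⌊Q^(1/n)⌋` boxes per
coordinate gives every `x` a denominator `p ≤ M^n ≤ Q` with `|p a xᵢ - kᵢ| ≤ 1/M`, which is precise
enough once `p ≥ Q/4^(n+1)`, because `M ≈ R^((1-2σ)/n)` outgrows `R^σ` when `σ(n+2) < 1`. The points
whose Dirichlet denominator is smaller than `Q/4^(n+1)` lie, for each such `p`, in a product of `n`
unions of `p a + 1` intervals of length `2/(p a M)`; summing over `p` bounds their measure by
`Q/4^(n+1) · (2(1 + 1/a)/M)^n ≤ ((1 + 1/M)(1 + 1/a)/2)^n / 4 ≤ 1/4`.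
-/

open MeasureTheory Set Filter
open scoped ENNReal

theorem exists_nat_simultaneous_approx {ι : Type*} [Fintype ι] (y : ι → ℝ) {M : ℕ}
    (hM : 0 < M) :
    ∃ q : ℕ, 0 < q ∧ q ≤ M ^ Fintype.card ι ∧ ∀ i, ∃ m : ℤ, |q * y i - m| ≤ 1 / M := by
  classical
  have hM' : (0 : ℝ) < M := by exact_mod_cast hM
  let cell : ℕ → ι → ℤ := fun q i => ⌊M * Int.fract (q * y i)⌋
  have hcell : MapsTo cell (Finset.range (M ^ Fintype.card ι + 1))
      ↑(Fintype.piFinset fun _ : ι => Finset.Ico 0 (M : ℤ)) := by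
    intro q _
    simp only [Fintype.coe_piFinset, Finset.coe_Ico, Set.mem_pi, Set.mem_univ, Set.mem_Ico,
      true_implies, cell]
    intro i
    refine ⟨Int.floor_nonneg.2 (by positivity), Int.floor_lt.2 ?_⟩
    have := Int.fract_lt_one (q * y i)
    push_cast
    nlinarith
  obtain ⟨q₁, hq₁, q₂, hq₂, hne, heq⟩ :=
    Finset.exists_ne_map_eq_of_card_lt_of_maps_to (by simp) hcell
  wlog hlt : q₁ < q₂ generalizing q₁ q₂
  · exact this q₂ hq₂ q₁ hq₁ hne.symm heq.symm (lt_of_le_of_ne (not_lt.1 hlt) hne.symm)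
  refine ⟨q₂ - q₁, by omega,
    (Nat.sub_le _ _).trans (Nat.lt_succ_iff.1 (Finset.mem_range.1 hq₂)),
    fun i => ⟨⌊(q₂ : ℝ) * y i⌋ - ⌊(q₁ : ℝ) * y i⌋, ?_⟩⟩
  have hclose := Int.abs_sub_lt_one_of_floor_eq_floor (congrFun heq i).symm
  rw [← mul_sub, abs_mul, abs_of_pos hM', ← lt_div_iff₀' hM'] at hclose
  refine le_of_eq_of_le ?_ hclose.le
  rw [Nat.cast_sub hlt.le, Int.fract, Int.fract]
  push_cast
  ring_nf

theorem volume_Icc_near_multiples_le {N : ℕ} (hN : 0 < N) {δ : ℝ} (hδ1 : δ < 1) :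
    volume {t ∈ Icc (0 : ℝ) 1 | ∃ m : ℤ, |N * t - m| ≤ δ} ≤
      ENNReal.ofReal (2 * δ * (1 + 1 / N)) := by
  have hN' : (0 : ℝ) < N := by exact_mod_cast hN
  have hcover : {t ∈ Icc (0 : ℝ) 1 | ∃ m : ℤ, |N * t - m| ≤ δ} ⊆
      ⋃ m ∈ Finset.Icc (0 : ℤ) N, Icc ((m - δ) / N) ((m + δ) / N) := by
    rintro t ⟨⟨ht0, ht1⟩, m, hm⟩
    rw [abs_le] at hm
    have hm0 : (-1 : ℝ) < m := by nlinarith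
    have hmN : (m : ℝ) < (N : ℤ) + 1 := by push_cast; nlinarith
    simp only [mem_iUnion, Finset.mem_Icc, mem_Icc, div_le_iff₀ hN', le_div_iff₀ hN', exists_prop]
    exact ⟨m, ⟨by exact_mod_cast hm0, Int.lt_add_one_iff.1 (by exact_mod_cast hmN)⟩,
      by linarith, by linarith⟩
  calc volume {t ∈ Icc (0 : ℝ) 1 | ∃ m : ℤ, |N * t - m| ≤ δ}
      ≤ ∑ m ∈ Finset.Icc (0 : ℤ) N, volume (Icc ((m - δ) / N) ((m + δ) / N)) :=
        (measure_mono hcover).trans (measure_biUnion_finset_le _ _)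
    _ = (N + 1) * ENNReal.ofReal (2 * δ / N) := by
        have hlen (m : ℤ) : (m + δ) / N - (m - δ) / N = 2 * δ / N := by ring
        simp only [Real.volume_Icc, hlen, Finset.sum_const, Int.card_Icc, nsmul_eq_mul]
        simp
    _ = ENNReal.ofReal (2 * δ * (1 + 1 / N)) := by
        rw [← ENNReal.ofReal_natCast, ← ENNReal.ofReal_one,
          ← ENNReal.ofReal_add (by positivity) zero_le_one, ← ENNReal.ofReal_mul (by positivity)]
        congr 1
        field_simp

theorem volume_approx_small_denominator_le {ι : Type*} [Fintype ι] {a : ℕ} (ha : 0 < a)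
    {δ : ℝ} (hδ0 : 0 ≤ δ) (hδ1 : δ < 1) {P : ℝ} (hP : 0 ≤ P) :
    volume {x : ι → ℝ | (∀ i, x i ∈ Icc (0 : ℝ) 1) ∧
        ∃ p : ℕ, 0 < p ∧ (p : ℝ) ≤ P ∧ ∀ i, ∃ m : ℤ, |p * (a * x i) - m| ≤ δ} ≤
      ENNReal.ofReal (P * (2 * δ * (1 + 1 / a)) ^ Fintype.card ι) := by
  set S : ℕ → Set ℝ := fun N => {t ∈ Icc (0 : ℝ) 1 | ∃ m : ℤ, |N * t - m| ≤ δ}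
  have hcover : {x : ι → ℝ | (∀ i, x i ∈ Icc (0 : ℝ) 1) ∧
        ∃ p : ℕ, 0 < p ∧ (p : ℝ) ≤ P ∧ ∀ i, ∃ m : ℤ, |p * (a * x i) - m| ≤ δ} ⊆
      ⋃ p ∈ Finset.Icc 1 ⌊P⌋₊, univ.pi fun _ => S (p * a) := by
    rintro x ⟨hx, p, hp, hpP, happrox⟩
    simp only [mem_iUnion, Finset.mem_Icc, mem_univ_pi, exists_prop]
    refine ⟨p, ⟨hp, Nat.le_floor hpP⟩, fun i => ⟨hx i, ?_⟩⟩
    push_cast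
    simpa only [mul_assoc] using happrox i
  have hfactor (p : ℕ) (hp : 0 < p) :
      volume (S (p * a)) ≤ ENNReal.ofReal (2 * δ * (1 + 1 / a)) := by
    refine (volume_Icc_near_multiples_le (by positivity) hδ1).trans (ENNReal.ofReal_le_ofReal ?_)
    have : (a : ℝ) ≤ (p * a : ℕ) := by exact_mod_cast Nat.le_mul_of_pos_left a hp
    gcongr
  calc _ ≤ ∑ p ∈ Finset.Icc 1 ⌊P⌋₊, volume (univ.pi fun _ : ι => S (p * a)) :=
        (measure_mono hcover).trans (measure_biUnion_finset_le _ _)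
    _ ≤ ∑ p ∈ Finset.Icc 1 ⌊P⌋₊, ENNReal.ofReal (2 * δ * (1 + 1 / a)) ^ Fintype.card ι := by
        refine Finset.sum_le_sum fun p hp => ?_
        rw [volume_pi_pi, Finset.prod_const, Finset.card_univ]
        exact pow_le_pow_left' (hfactor p (Finset.mem_Icc.1 hp).1) _
    _ ≤ ENNReal.ofReal (P * (2 * δ * (1 + 1 / a)) ^ Fintype.card ι) := by
        rw [Finset.sum_const, Nat.card_Icc, Nat.add_sub_cancel, nsmul_eq_mul,
          ← ENNReal.ofReal_pow (by positivity), ← ENNReal.ofReal_natCast,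
          ← ENNReal.ofReal_mul (by positivity)]
        exact ENNReal.ofReal_le_ofReal (by gcongr; exact Nat.floor_le hP)

theorem div_four_pow_mul_pow_le {n a M : ℕ} (ha : 3 ≤ a) (hM : 3 ≤ M) {Q : ℝ}
    (hQM : Q ≤ ((M : ℝ) + 1) ^ n) :
    Q / 4 ^ (n + 1) * (2 * (1 / M) * (1 + 1 / a)) ^ n ≤ 1 / 4 := by
  have ha' : (3 : ℝ) ≤ a := by exact_mod_cast ha
  have hM' : (3 : ℝ) ≤ M := by exact_mod_cast hM
  have hbase : 2 * (1 + 1 / (M : ℝ)) * (1 + 1 / a) ≤ 4 := by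
    have hM1 : 1 + 1 / (M : ℝ) ≤ 4 / 3 := by
      have : 1 / (M : ℝ) ≤ 1 / 3 := by gcongr
      linarith
    have ha1 : 1 + 1 / (a : ℝ) ≤ 4 / 3 := by
      have : 1 / (a : ℝ) ≤ 1 / 3 := by gcongr
      linarith
    nlinarith [mul_le_mul hM1 ha1 (by positivity) (by norm_num)]
  calc Q / 4 ^ (n + 1) * (2 * (1 / M) * (1 + 1 / a)) ^ n
      ≤ ((M : ℝ) + 1) ^ n / 4 ^ (n + 1) * (2 * (1 / M) * (1 + 1 / a)) ^ n := by gcongr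
    _ = (2 * (1 + 1 / (M : ℝ)) * (1 + 1 / a)) ^ n / 4 ^ (n + 1) := by
        rw [div_mul_eq_mul_div, ← mul_pow]
        congr 2
        field_simp
    _ ≤ 4 ^ n / 4 ^ (n + 1) := by gcongr
    _ = 1 / 4 := by rw [pow_succ, div_mul_cancel_left₀ (by positivity), one_div]

theorem three_quarters_le_volume_approx {ι : Type*} [Fintype ι] {a M : ℕ} (ha : 3 ≤ a)
    (hM : 3 ≤ M) {Q : ℝ} (hMQ : (M : ℝ) ^ Fintype.card ι ≤ Q)
    (hQM : Q ≤ ((M : ℝ) + 1) ^ Fintype.card ι) :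
    3 / 4 ≤ volume {x : ι → ℝ | (∀ i, x i ∈ Icc (0 : ℝ) 1) ∧
      ∃ p : ℕ, Q / 4 ^ (Fintype.card ι + 1) < p ∧ (p : ℝ) ≤ Q ∧
        ∀ i, ∃ m : ℤ, |p * (a * x i) - m| ≤ 1 / M} := by
  set n := Fintype.card ι
  have hM' : (3 : ℝ) ≤ M := by exact_mod_cast hM
  set G := {x : ι → ℝ | (∀ i, x i ∈ Icc (0 : ℝ) 1) ∧
      ∃ p : ℕ, Q / 4 ^ (n + 1) < p ∧ (p : ℝ) ≤ Q ∧ ∀ i, ∃ m : ℤ, |p * (a * x i) - m| ≤ 1 / M}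
  set B := {x : ι → ℝ | (∀ i, x i ∈ Icc (0 : ℝ) 1) ∧
      ∃ p : ℕ, 0 < p ∧ (p : ℝ) ≤ Q / 4 ^ (n + 1) ∧ ∀ i, ∃ m : ℤ, |p * (a * x i) - m| ≤ 1 / M}
  have hcube : univ.pi (fun _ : ι => Icc (0 : ℝ) 1) ⊆ G ∪ B := by
    intro x hx
    rw [mem_univ_pi] at hx
    obtain ⟨p, hp, hpM, happrox⟩ :=
      exists_nat_simultaneous_approx (fun i => a * x i) (by omega : 0 < M)
    by_cases hlarge : Q / 4 ^ (n + 1) < p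
    · have hpQ : (p : ℝ) ≤ Q := le_trans (by exact_mod_cast hpM) hMQ
      exact Or.inl ⟨hx, p, hlarge, hpQ, happrox⟩
    · exact Or.inr ⟨hx, p, hp, not_lt.1 hlarge, happrox⟩
  have hB : volume B ≤ 1 / 4 := by
    have hQ : 0 ≤ Q := le_trans (by positivity) hMQ
    calc volume B ≤ ENNReal.ofReal (Q / 4 ^ (n + 1) * (2 * (1 / M) * (1 + 1 / a)) ^ n) :=
          volume_approx_small_denominator_le (by omega) (by positivity)
            ((div_lt_one (by positivity)).2 (by linarith)) (by positivity)
      _ ≤ ENNReal.ofReal (1 / 4) := ENNReal.ofReal_le_ofReal (div_four_pow_mul_pow_le ha hM hQM)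
      _ = 1 / 4 := by rw [ENNReal.ofReal_div_of_pos (by norm_num)]; simp
  have hunion : 1 ≤ volume G + 1 / 4 := by
    calc (1 : ℝ≥0∞) = volume (univ.pi fun _ : ι => Icc (0 : ℝ) 1) := by
          rw [volume_pi_pi]; simp
      _ ≤ volume G + volume B := (measure_mono hcube).trans (measure_union_le G B)
      _ ≤ volume G + 1 / 4 := by gcongr
  have hquarter : (1 : ℝ≥0∞) - 1 / 4 = 3 / 4 := by
    refine ENNReal.sub_eq_of_eq_add (by simp) ?_
    rw [ENNReal.div_add_div_same, eq_comm, ENNReal.div_eq_one_iff (by simp) (by simp)]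
    norm_num
  exact hquarter ▸ tsub_le_iff_right.2 hunion

theorem eventually_add_mul_rpow_le_rpow {a b : ℝ} (ha : 0 ≤ a) (hab : a < b) (c d : ℝ) :
    ∀ᶠ R in atTop, c + d * R ^ a ≤ R ^ b := by
  filter_upwards [eventually_ge_atTop 1,
    (tendsto_rpow_atTop (sub_pos.2 hab)).eventually_ge_atTop (|c| + |d|)] with R hR1 hR
  have hRa : 1 ≤ R ^ a := Real.one_le_rpow hR1 ha
  calc c + d * R ^ a ≤ (|c| + |d|) * R ^ a := by
        nlinarith [le_abs_self c, le_abs_self d, abs_nonneg c]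
    _ ≤ R ^ (b - a) * R ^ a := by gcongr
    _ = R ^ b := by rw [← Real.rpow_add (by linarith), sub_add_cancel]

theorem exists_nat_pow_le_le_add_one_pow {Q : ℝ} (hQ : 0 ≤ Q) {n : ℕ} (hn : n ≠ 0) :
    ∃ M : ℕ, Q ^ (n⁻¹ : ℝ) < M + 1 ∧ (M : ℝ) ^ n ≤ Q ∧ Q ≤ ((M : ℝ) + 1) ^ n := by
  refine ⟨⌊Q ^ (n⁻¹ : ℝ)⌋₊, Nat.lt_floor_add_one _, ?_, ?_⟩
  · calc (⌊Q ^ (n⁻¹ : ℝ)⌋₊ : ℝ) ^ n ≤ (Q ^ (n⁻¹ : ℝ)) ^ n := by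
          gcongr; exact Nat.floor_le (by positivity)
      _ = Q := Real.rpow_inv_natCast_pow hQ hn
  · calc Q = (Q ^ (n⁻¹ : ℝ)) ^ n := (Real.rpow_inv_natCast_pow hQ hn).symm
      _ ≤ _ := by gcongr; exact (Nat.lt_floor_add_one _).le

theorem abs_sub_inv_mul_div_le_of_abs_mul_sub_le {x m a p δ : ℝ} (ha : 0 < a) (hp : 0 < p)
    (h : |p * (a * x) - m| ≤ δ) : |x - a⁻¹ * m / p| ≤ δ / (p * a) := by
  have hpa : 0 < p * a := mul_pos hp ha
  rw [show x - a⁻¹ * m / p = (p * (a * x) - m) / (p * a) by field_simp, abs_div,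
    abs_of_pos hpa]
  gcongr

theorem setOf_approx_subset {ι : Type*} {a M : ℕ} (ha : 0 < a) (hM : 0 < M) {Q K ε : ℝ}
    (hK : 0 < K) (haM : K * a ≤ ε * M) :
    {x : ι → ℝ | (∀ i, x i ∈ Icc (0 : ℝ) 1) ∧
      ∃ p : ℕ, Q / K < p ∧ (p : ℝ) ≤ Q ∧ ∀ i, ∃ m : ℤ, |p * (a * x i) - m| ≤ 1 / M} ⊆
    {x : ι → ℝ | (∀ i, x i ∈ Icc (0 : ℝ) 1) ∧
      ∃ k : ι → ℤ, ∃ p : ℤ, Q / K ≤ p ∧ (p : ℝ) ≤ Q ∧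
        ∀ i, |x i - (a : ℝ)⁻¹ * k i / p| ≤ ε / (Q * a * a)} := by
  rintro x ⟨hx, p, hpQ₀, hpQ, happrox⟩
  choose k hk using happrox
  have hp : (0 : ℝ) < p := lt_of_le_of_lt (div_nonneg ((Nat.cast_nonneg p).trans hpQ) hK.le) hpQ₀
  have hQ : 0 < Q := hp.trans_le hpQ
  have ha' : (0 : ℝ) < a := by exact_mod_cast ha
  have hQp : Q ≤ p * K := ((div_lt_iff₀ hK).1 hpQ₀).le
  refine ⟨hx, k, p, by exact_mod_cast hpQ₀.le, by exact_mod_cast hpQ, fun i => ?_⟩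
  rw [Int.cast_natCast]
  refine (abs_sub_inv_mul_div_le_of_abs_mul_sub_le ha' hp (hk i)).trans ?_
  rw [div_div, div_le_div_iff₀ (by positivity) (by positivity)]
  nlinarith [mul_le_mul_of_nonneg_right hQp ha'.le, mul_le_mul_of_nonneg_right haM hp.le]

/-- For `0 < σ < 1/(n+2)` and `ε₂ > 0`, for all sufficiently large `R` with `R^σ` a
positive integer, the set `V` of `x ∈ [0,1]^n` admitting an approximation
`max_i |x_i - R^{-σ} k_i / p| ≤ ε₂/R` with `4^{-n-1} R^{1-2σ} ≤ p ≤ R^{1-2σ}`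
has Lebesgue measure at least `3/4`. -/
theorem measure_V_ge (n : ℕ) (hn : 1 ≤ n) (σ : ℝ) (hσ0 : 0 < σ)
    (hσ : σ < 1 / (n + 2)) (ε₂ : ℝ) (hε₂ : 0 < ε₂) :
    ∃ R₀ : ℝ, ∀ R : ℝ, R₀ ≤ R → (∃ m : ℕ, 0 < m ∧ R ^ σ = (m : ℝ)) →
      3 / 4 ≤ MeasureTheory.volume
        {x : Fin n → ℝ | (∀ i, x i ∈ Set.Icc (0 : ℝ) 1) ∧
          ∃ k : Fin n → ℤ, ∃ p : ℤ,
            4 ^ (-(n : ℝ) - 1) * R ^ (1 - 2 * σ) ≤ (p : ℝ) ∧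
            (p : ℝ) ≤ R ^ (1 - 2 * σ) ∧
            ∀ i, |x i - R ^ (-σ) * (k i : ℝ) / (p : ℝ)| ≤ ε₂ / R} := by
  have hexp : σ < (1 - 2 * σ) / n := by
    rw [lt_div_iff₀ (by positivity)] at hσ
    rw [lt_div_iff₀ (by exact_mod_cast hn)]
    linarith
  obtain ⟨R₀, hR₀⟩ := eventually_atTop.1 ((eventually_gt_atTop 0).and
    (((tendsto_rpow_atTop hσ0).eventually_ge_atTop 3).and
      (eventually_add_mul_rpow_le_rpow hσ0.le hexp 4 (4 ^ (n + 1) / ε₂))))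
  refine ⟨R₀, fun R hR ⟨a, ha₀, ha⟩ => ?_⟩
  obtain ⟨hR0, ha3, hgrowth⟩ := hR₀ R hR
  rw [ha] at ha3 hgrowth
  set Q := R ^ (1 - 2 * σ)
  obtain ⟨M, hMroot, hMQ, hQM⟩ := exists_nat_pow_le_le_add_one_pow (by positivity : 0 ≤ Q)
    (by omega : n ≠ 0)
  rw [← Real.rpow_mul hR0.le, ← div_eq_mul_inv] at hMroot
  have hM3 : 3 ≤ M := by
    exact_mod_cast (by linarith [show 0 ≤ 4 ^ (n + 1) / ε₂ * a by positivity] : (3 : ℝ) ≤ M)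
  have haM : 4 ^ (n + 1) * a ≤ ε₂ * M := by
    have hMa : 4 ^ (n + 1) / ε₂ * a ≤ M := by linarith
    rwa [div_mul_eq_mul_div, div_le_iff₀' hε₂] at hMa
  have hR : R = Q * a * a := by
    rw [← ha, ← Real.rpow_add hR0, ← Real.rpow_add hR0]; ring_nf; exact (Real.rpow_one R).symm
  have hK : (4 : ℝ) ^ (-(n : ℝ) - 1) * Q = Q / 4 ^ (n + 1) := by
    rw [show -(n : ℝ) - 1 = -((n + 1 : ℕ) : ℝ) by push_cast; ring, Real.rpow_neg (by norm_num),
      Real.rpow_natCast, inv_mul_eq_div]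
  have hcore := three_quarters_le_volume_approx (ι := Fin n) (Q := Q) (by exact_mod_cast ha3) hM3
    (by rwa [Fintype.card_fin]) (by rwa [Fintype.card_fin])
  rw [Fintype.card_fin] at hcore
  rw [hK, Real.rpow_neg hR0.le, ha, hR]
  exact hcore.trans (measure_mono (setOf_approx_subset ha₀ (by omega) (by positivity) haM))
end

section
/- Let $n \ge 1$, $0 < \sigma < \frac{1}{n+2}$, and $\epsilon_2 > 0$. Define $X = (R^{\sigma-1}\mathbb{Z}^n + B(0,\epsilon_2/R)) \cap \{x : 4^{-n-2} < |x| < 2\sqrt{n}\}$ and $T = (R^{2\sigma-1}\mathbb{Z}) \cap (4^{-n-1}, 1)$. Then for all sufficiently large $R$ such that $R^{\sigma}$ is a positive integer, the set $\frac{XR}{T} = \{xR/t : x \in X, t \in T\}$ satisfies $\left|\frac{XR}{T} \cap B(0,R)\right| \ge c_n R^n$ for a constant $c_n > 0$ depending only on $n$ (and $\epsilon_2, \sigma$). -/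
/-!
The cube `(L, 2L)ⁿ`, `L = R / (2√n)`, lies in `B(0, R)` and has volume `Lⁿ`. For `z` in it put
`y = R^σ z / R` and `J = R^(1-2σ)`; then `z = (R/t) • x` with `t = R^(2σ-1) j ∈ T` and `x ∈ X` as
soon as `j ∈ (J/2, J)` and `j y` lies within `ε₂ / (√n R^σ)` of `ℤⁿ`. Dirichlet's simultaneous
approximation theorem with parameter `Q ≈ J^(1/n) / 4` gives some `q ≤ Qⁿ < J/2` with
`‖q y - m‖_∞ ≤ 1/Q`, and a multiple `j = k q ∈ (J/2, J)` then works provided `q` is not too small.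
The points of the cube for which `q` can be taken below a threshold `q₀` (the resonant set) have
volume at most `q₀ (C/Q)ⁿ Lⁿ ≤ Lⁿ / 2`; this is where `σ < 1 / (n + 2)` is needed, as it makes
`Q / R^σ → ∞`.
-/

open MeasureTheory Set Filter

namespace EuclideanSpace

variable {ι : Type*} [Fintype ι]

theorem volume_setOf_forall_mem (S : Set ℝ) :
    volume {z : EuclideanSpace ℝ ι | ∀ i, z i ∈ S} = volume S ^ Fintype.card ι := by
  have h : {z : EuclideanSpace ℝ ι | ∀ i, z i ∈ S} =
      (MeasurableEquiv.toLp 2 (ι → ℝ)).symm ⁻¹' univ.pi fun _ => S := by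
    ext z; simp
  rw [h, (volume_preserving_symm_measurableEquiv_toLp ι).measure_preimage_equiv, volume_pi_pi,
    Finset.prod_const, Finset.card_univ]

theorem norm_lt_of_forall_abs_lt [Nonempty ι] {z : EuclideanSpace ℝ ι} {a : ℝ}
    (h : ∀ i, |z i| < a) : ‖z‖ < √(Fintype.card ι) * a := by
  have ha : 0 ≤ a := (abs_nonneg _).trans (h (Classical.arbitrary ι)).le
  rw [EuclideanSpace.norm_eq, ← Real.sqrt_sq ha, ← Real.sqrt_mul (Nat.cast_nonneg _)]
  refine Real.sqrt_lt_sqrt (by positivity) ?_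
  calc ∑ i, ‖z i‖ ^ 2 < ∑ _i : ι, a ^ 2 :=
        Finset.sum_lt_sum_of_nonempty Finset.univ_nonempty fun i _ => by
          rw [Real.norm_eq_abs, sq_lt_sq, abs_abs, abs_of_nonneg ha]; exact h i
    _ = Fintype.card ι * a ^ 2 := by simp

theorem lt_norm_of_forall_lt_abs [Nonempty ι] {z : EuclideanSpace ℝ ι} {a : ℝ} (ha : 0 ≤ a)
    (h : ∀ i, a < |z i|) : √(Fintype.card ι) * a < ‖z‖ := by
  rw [EuclideanSpace.norm_eq, ← Real.sqrt_sq ha, ← Real.sqrt_mul (Nat.cast_nonneg _)]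
  refine Real.sqrt_lt_sqrt (by positivity) ?_
  calc (Fintype.card ι : ℝ) * a ^ 2 = ∑ _i : ι, a ^ 2 := by simp
    _ < ∑ i, ‖z i‖ ^ 2 :=
        Finset.sum_lt_sum_of_nonempty Finset.univ_nonempty fun i _ => by
          rw [Real.norm_eq_abs, sq_lt_sq, abs_abs, abs_of_nonneg ha]; exact h i

end EuclideanSpace

theorem exists_nat_forall_abs_mul_sub_int_le {ι : Type*} [Fintype ι] (θ : ι → ℝ) {Q : ℕ}
    (hQ : 0 < Q) :
    ∃ q : ℕ, 0 < q ∧ q ≤ Q ^ Fintype.card ι ∧ ∀ i, ∃ m : ℤ, |q * θ i - m| ≤ 1 / Q := by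
  classical
  have hQ' : (0 : ℝ) < Q := Nat.cast_pos.2 hQ
  -- two of the `Q ^ card ι + 1` vectors of leading base-`Q` digits of `fract (j θ i)` coincide
  let digits : ℕ → ι → ℤ := fun j i => ⌊Q * Int.fract (j * θ i)⌋
  have hmaps : ∀ j ∈ Finset.range (Q ^ Fintype.card ι + 1),
      digits j ∈ Fintype.piFinset fun _ => Finset.Ico (0 : ℤ) Q := by
    intro j _
    simp only [Fintype.mem_piFinset, Finset.mem_Ico]
    intro i
    constructor
    · exact Int.floor_nonneg.2 (mul_nonneg hQ'.le (Int.fract_nonneg _))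
    · exact Int.floor_lt.2 (by
        push_cast
        nlinarith [Int.fract_lt_one ((j : ℝ) * θ i)])
  obtain ⟨a, ha, b, hb, hab, heq⟩ := Finset.exists_ne_map_eq_of_card_lt_of_maps_to
    (by simp) hmaps
  wlog hlt : a < b generalizing a b
  · exact this b hb a ha hab.symm heq.symm (lt_of_le_of_ne (not_lt.1 hlt) hab.symm)
  rw [Finset.mem_range] at hb
  refine ⟨b - a, by omega, by omega, fun i => ⟨⌊b * θ i⌋ - ⌊a * θ i⌋, ?_⟩⟩
  have hclose := Int.abs_sub_lt_one_of_floor_eq_floor (congrFun heq i).symm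
  rw [← mul_sub, abs_mul, abs_of_pos hQ'] at hclose
  have hdiff : ((b - a : ℕ) : ℝ) * θ i - ((⌊b * θ i⌋ - ⌊a * θ i⌋ : ℤ) : ℝ) =
      Int.fract (b * θ i) - Int.fract (a * θ i) := by
    rw [Nat.cast_sub hlt.le]
    push_cast
    simp only [Int.fract]
    ring
  rw [hdiff, le_div_iff₀ hQ', mul_comm]
  exact hclose.le

theorem exists_nat_mem_Ioo_forall_abs_mul_sub_int_lt {ι : Type*} (y : ι → ℝ) {J δ : ℝ}
    {q Q : ℕ} (hq : 0 < q) (hqJ : 2 * q < J) (hy : ∀ i, ∃ m : ℤ, |q * y i - m| ≤ 1 / Q)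
    (hδ : (J / (2 * q) + 1) / Q < δ) :
    ∃ j : ℕ, (j : ℝ) ∈ Ioo (J / 2) J ∧ ∀ i, ∃ m : ℤ, |j * y i - m| < δ := by
  have hq' : (0 : ℝ) < q := Nat.cast_pos.2 hq
  have hJ : 0 < J := by linarith
  set k := ⌊J / (2 * q)⌋₊ + 1
  have hk_gt : J / (2 * q) < k := by
    simpa [k] using Nat.lt_floor_add_one (J / (2 * q))
  have hk_le : (k : ℝ) ≤ J / (2 * q) + 1 := by
    simpa [k] using Nat.floor_le (show 0 ≤ J / (2 * q) by positivity)
  refine ⟨k * q, ⟨?_, ?_⟩, fun i => ?_⟩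
  · push_cast
    rw [div_lt_iff₀ (by positivity)] at hk_gt
    linarith
  · push_cast
    have := mul_le_mul_of_nonneg_right hk_le hq'.le
    rw [add_mul, div_mul_eq_mul_div, mul_div_mul_right _ _ hq'.ne'] at this
    linarith
  · obtain ⟨m, hm⟩ := hy i
    refine ⟨k * m, ?_⟩
    calc |((k * q : ℕ) : ℝ) * y i - ((k * m : ℤ) : ℝ)| = k * |q * y i - m| := by
          rw [← abs_of_nonneg (Nat.cast_nonneg (α := ℝ) k), ← abs_mul]
          push_cast
          ring_nf
      _ ≤ k * (1 / Q) := by gcongr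
      _ ≤ (J / (2 * q) + 1) / Q := by
          rw [mul_one_div]; gcongr
      _ < δ := hδ

theorem volume_setOf_mem_Ioo_abs_mul_sub_int_le {α r a b : ℝ} (hα : 0 < α) (hr : 0 ≤ r)
    (hr1 : r ≤ 1) (hab : a ≤ b) :
    volume {s | s ∈ Ioo a b ∧ ∃ m : ℤ, |α * s - m| ≤ r} ≤
      ENNReal.ofReal (2 * r * (b - a) + 6 * r / α) := by
  set M := Finset.Icc ⌈α * a - r⌉ ⌊α * b + r⌋
  have hcover : {s | s ∈ Ioo a b ∧ ∃ m : ℤ, |α * s - m| ≤ r} ⊆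
      ⋃ m ∈ M, Icc ((m - r) / α) ((m + r) / α) := by
    rintro s ⟨⟨has, hsb⟩, m, hm⟩
    obtain ⟨hm₁, hm₂⟩ := abs_sub_le_iff.1 hm
    refine mem_biUnion (x := m) (Finset.mem_Icc.2 ⟨Int.ceil_le.2 ?_, Int.le_floor.2 ?_⟩)
      ⟨(div_le_iff₀ hα).2 ?_, (le_div_iff₀ hα).2 ?_⟩ <;> nlinarith
  have hcard : (M.card : ℝ) ≤ α * (b - a) + 3 := by
    have hlo : α * a - r ≤ ⌈α * a - r⌉ := Int.le_ceil _
    have hhi : (⌊α * b + r⌋ : ℝ) ≤ α * b + r := Int.floor_le _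
    rw [Int.card_Icc]
    rcases le_or_gt 0 (⌊α * b + r⌋ + 1 - ⌈α * a - r⌉) with h | h
    · rw [← Int.cast_natCast, Int.toNat_of_nonneg h]
      push_cast
      linarith
    · rw [Int.toNat_of_nonpos h.le]
      push_cast
      nlinarith
  calc volume {s | s ∈ Ioo a b ∧ ∃ m : ℤ, |α * s - m| ≤ r}
      ≤ ∑ m ∈ M, volume (Icc ((m - r) / α) ((m + r) / α)) :=
        (measure_mono hcover).trans (measure_biUnion_finset_le _ _)
    _ = M.card • ENNReal.ofReal (2 * r / α) := by
        rw [← Finset.sum_const]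
        refine Finset.sum_congr rfl fun m _ => ?_
        rw [Real.volume_Icc]
        ring_nf
    _ ≤ ENNReal.ofReal ((α * (b - a) + 3) * (2 * r / α)) := by
        rw [nsmul_eq_mul, ← ENNReal.ofReal_natCast, ← ENNReal.ofReal_mul (Nat.cast_nonneg _)]
        gcongr
    _ = ENNReal.ofReal (2 * r * (b - a) + 6 * r / α) := by
        congr 1
        field_simp
        ring

theorem exists_amplification_parameters {n : ℕ} (hn : 1 ≤ n) {C P J δ : ℝ} (hC : 1 ≤ C)
    (hP : 32 * C ≤ P) (hJ : J = P ^ n) (hδ : 64 * 8 ^ n * C ^ n ≤ δ * P) :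
    ∃ Q q₀ : ℕ, 0 < Q ∧ 2 * (Q : ℝ) ^ n < J ∧
      (∀ q : ℕ, q₀ < q → (J / (2 * q) + 1) / Q < δ) ∧ q₀ * C ^ n ≤ (Q : ℝ) ^ n / 2 := by
  have hP0 : 0 < P := by linarith
  have hCn : 1 ≤ C ^ n := one_le_pow₀ hC
  have hδ0 : 0 < δ := pos_of_mul_pos_left ((by positivity : (0 : ℝ) < _).trans_le hδ) hP0.le
  set Q := ⌊P / 4⌋₊
  have hQ_le : (Q : ℝ) ≤ P / 4 := Nat.floor_le (by positivity)
  have hQ_ge : P / 8 ≤ Q := by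
    have : P / 4 < Q + 1 := Nat.lt_floor_add_one _
    linarith
  have hQ0 : (0 : ℝ) < Q := by linarith
  have h4C : 4 * C ≤ Q := by linarith
  have hδQ : 8 * 8 ^ n * C ^ n ≤ δ * Q := by nlinarith
  have h4n : (4 : ℝ) ≤ 4 ^ n := le_self_pow₀ (by norm_num) (by omega)
  set q₀ := ⌈2 * J / (δ * Q)⌉₊
  have hJ0 : 0 < J := hJ ▸ pow_pos hP0 n
  refine ⟨Q, q₀, by exact_mod_cast hQ0, ?_, fun q hq => ?_, ?_⟩
  · calc 2 * (Q : ℝ) ^ n ≤ 2 * (P / 4) ^ n := by gcongr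
      _ = 2 * J / 4 ^ n := by rw [hJ, div_pow]; ring
      _ < J := by rw [div_lt_iff₀ (by positivity)]; nlinarith
  · have hq : 2 * J / (δ * Q) < q := (Nat.le_ceil _).trans_lt (by exact_mod_cast hq)
    have hq0 : (0 : ℝ) < q := lt_trans (by positivity) hq
    rw [div_lt_iff₀ (by positivity)] at hq
    have h1 : 1 / (Q : ℝ) ≤ δ / 2 := by
      rw [div_le_div_iff₀ hQ0 (by norm_num)]
      nlinarith [one_le_pow₀ (by norm_num : (1 : ℝ) ≤ 8) (n := n)]
    have h2 : J / (2 * q) / Q < δ / 4 := by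
      rw [div_div, div_lt_div_iff₀ (by positivity) (by norm_num)]
      nlinarith
    rw [add_div]
    linarith
  · have hq₀ : (q₀ : ℝ) < 2 * J / (δ * Q) + 1 := Nat.ceil_lt_add_one (by positivity)
    have hJQ : J ≤ 8 ^ n * (Q : ℝ) ^ n := by
      rw [hJ, ← mul_pow]; gcongr; linarith
    have hCQ : 4 * C ^ n ≤ (Q : ℝ) ^ n :=
      calc 4 * C ^ n ≤ 4 ^ n * C ^ n := by gcongr
        _ = (4 * C) ^ n := (mul_pow _ _ _).symm
        _ ≤ (Q : ℝ) ^ n := by gcongr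
    have hmain : 2 * J / (δ * Q) * C ^ n ≤ (Q : ℝ) ^ n / 4 := by
      rw [div_mul_eq_mul_div, div_le_div_iff₀ (by positivity) (by norm_num)]
      calc 2 * J * C ^ n * 4 ≤ 2 * (8 ^ n * (Q : ℝ) ^ n) * C ^ n * 4 := by gcongr
        _ = (8 * 8 ^ n * C ^ n) * Q ^ n := by ring
        _ ≤ Q ^ n * (δ * Q) := by rw [mul_comm _ ((Q : ℝ) ^ n)]; gcongr
    calc q₀ * C ^ n ≤ (2 * J / (δ * Q) + 1) * C ^ n := by gcongr
      _ = 2 * J / (δ * Q) * C ^ n + C ^ n := by ring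
      _ ≤ (Q : ℝ) ^ n / 2 := by linarith

theorem tendsto_div_mul_rpow_mul_rpow_atTop {a b σ β : ℝ} (ha : 0 < a) (hb : 0 < b)
    (hσβ : σ < β) : Tendsto (fun R : ℝ => a / (b * R ^ σ) * R ^ β) atTop atTop := by
  refine ((tendsto_rpow_atTop (sub_pos.2 hσβ)).const_mul_atTop (div_pos ha hb)).congr' ?_
  filter_upwards [eventually_gt_atTop 0] with R hR
  rw [Real.rpow_sub hR]
  field_simp

-- The sets `X`, `T` and `XR/T` of the statement.
def latticeNbhdAnnulus (n : ℕ) (σ ε₂ R : ℝ) : Set (EuclideanSpace ℝ (Fin n)) :=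
  {x | (∃ m : Fin n → ℤ,
      ‖x - (EuclideanSpace.equiv (Fin n) ℝ).symm (fun i => R ^ (σ - 1) * (m i : ℝ))‖ < ε₂ / R) ∧
    4 ^ (-(n : ℝ) - 2) < ‖x‖ ∧ ‖x‖ < 2 * √n}

def latticeScales (n : ℕ) (σ R : ℝ) : Set ℝ :=
  {t | (∃ j : ℤ, t = R ^ (2 * σ - 1) * (j : ℝ)) ∧ 4 ^ (-(n : ℝ) - 1) < t ∧ t < 1}

def scaledQuotient {E : Type*} [SMul ℝ E] (R : ℝ) (X : Set E) (T : Set ℝ) : Set E :=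
  {z | ∃ x ∈ X, ∃ t ∈ T, z = (R / t) • x}

def resonantSet (n : ℕ) (σ R : ℝ) (Q q₀ : ℕ) : Set (EuclideanSpace ℝ (Fin n)) :=
  ⋃ q ∈ Finset.Icc 1 q₀, {z | ∀ i, z i ∈ Ioo (R / (2 * √n)) (R / √n) ∧
    ∃ m : ℤ, |q * (R ^ σ / R * z i) - m| ≤ 1 / Q}

theorem four_rpow_lt_quarter {e : ℝ} (he : e < -1) : (4 : ℝ) ^ e < 1 / 4 := by
  calc (4 : ℝ) ^ e < 4 ^ (-1 : ℝ) := Real.rpow_lt_rpow_of_exponent_lt (by norm_num) he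
    _ = 1 / 4 := by norm_num [Real.rpow_neg_one]

theorem norm_mem_Ioo_of_forall_mem_Ioo {n : ℕ} (hn : 1 ≤ n) {R : ℝ} (hR : 0 < R)
    {z : EuclideanSpace ℝ (Fin n)} (hz : ∀ i, z i ∈ Ioo (R / (2 * √n)) (R / √n)) :
    ‖z‖ ∈ Ioo (R / 2) R := by
  have : Nonempty (Fin n) := ⟨⟨0, hn⟩⟩
  have hsn : 0 < √(n : ℝ) := Real.sqrt_pos.2 (by exact_mod_cast hn)
  have hz_abs : ∀ i, |z i| = z i := fun i => abs_of_pos (lt_trans (by positivity) (hz i).1)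
  constructor
  · have := EuclideanSpace.lt_norm_of_forall_lt_abs (a := R / (2 * √n)) (by positivity)
      fun i => (hz_abs i).symm ▸ (hz i).1
    rw [Fintype.card_fin] at this
    exact lt_of_eq_of_lt (by field_simp) this
  · have := EuclideanSpace.norm_lt_of_forall_abs_lt fun i => (hz_abs i).symm ▸ (hz i).2
    rwa [Fintype.card_fin, mul_div_cancel₀ _ hsn.ne'] at this

theorem norm_smul_sub_lattice_lt {n : ℕ} (hn : 1 ≤ n) {σ ε₂ R : ℝ} (hR : 0 < R)
    {z : EuclideanSpace ℝ (Fin n)} {j : ℤ} {m : Fin n → ℤ}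
    (hm : ∀ i, |j * (R ^ σ / R * z i) - m i| < ε₂ / (√n * R ^ σ)) :
    ‖(R ^ (2 * σ - 1) * j / R) • z -
        (EuclideanSpace.equiv (Fin n) ℝ).symm (fun i => R ^ (σ - 1) * (m i : ℝ))‖ < ε₂ / R := by
  have : Nonempty (Fin n) := ⟨⟨0, hn⟩⟩
  have hsn : 0 < √(n : ℝ) := Real.sqrt_pos.2 (by exact_mod_cast hn)
  have hN : 0 < R ^ σ := Real.rpow_pos_of_pos hR σ
  have hspacing : R ^ (σ - 1) = R ^ σ / R := Real.rpow_sub_one hR.ne' σ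
  have hscale : R ^ (2 * σ - 1) = R ^ σ * (R ^ σ / R) := by
    rw [← hspacing, ← Real.rpow_add hR]; ring_nf
  refine (EuclideanSpace.norm_lt_of_forall_abs_lt (a := ε₂ / (√n * R)) fun i => ?_).trans_eq
    (by rw [Fintype.card_fin]; field_simp)
  simp only [PiLp.sub_apply, PiLp.smul_apply, smul_eq_mul, EuclideanSpace.equiv,
    PiLp.continuousLinearEquiv_symm_apply]
  rw [hspacing, hscale, show R ^ σ * (R ^ σ / R) * j / R * z i - R ^ σ / R * m i =
    R ^ σ / R * (j * (R ^ σ / R * z i) - m i) by ring, abs_mul, abs_of_pos (by positivity)]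
  calc R ^ σ / R * |j * (R ^ σ / R * z i) - m i| < R ^ σ / R * (ε₂ / (√n * R ^ σ)) := by
        gcongr; exact hm i
    _ = ε₂ / (√n * R) := by field_simp

theorem mem_scaledQuotient_inter_ball {n : ℕ} (hn : 1 ≤ n) {σ ε₂ R : ℝ} (hR : 0 < R)
    {z : EuclideanSpace ℝ (Fin n)} (hz : ∀ i, z i ∈ Ioo (R / (2 * √n)) (R / √n)) {j : ℤ}
    (hj : R ^ (2 * σ - 1) * j ∈ Ioo (1 / 2) 1)
    (hm : ∀ i, ∃ m : ℤ, |j * (R ^ σ / R * z i) - m| < ε₂ / (√n * R ^ σ)) :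
    z ∈ scaledQuotient R (latticeNbhdAnnulus n σ ε₂ R) (latticeScales n σ R) ∩
      Metric.ball 0 R := by
  have hn' : (1 : ℝ) ≤ n := by exact_mod_cast hn
  set t := R ^ (2 * σ - 1) * j
  obtain ⟨hz_gt, hz_lt⟩ := norm_mem_Ioo_of_forall_mem_Ioo hn hR hz
  have ht : 0 < t := by linarith [hj.1]
  have hx : ‖(t / R) • z‖ = t / R * ‖z‖ := by
    rw [norm_smul, Real.norm_of_nonneg (by positivity)]
  choose m hm using hm
  refine ⟨⟨(t / R) • z, ⟨⟨m, norm_smul_sub_lattice_lt hn hR hm⟩, ?_, ?_⟩, t,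
    ⟨⟨j, rfl⟩, ?_, hj.2⟩, ?_⟩, ?_⟩
  · rw [hx]
    calc (4 : ℝ) ^ (-(n : ℝ) - 2) < 1 / 4 := four_rpow_lt_quarter (by linarith)
      _ < t / 2 := by linarith [hj.1]
      _ = t / R * (R / 2) := by field_simp
      _ < t / R * ‖z‖ := by gcongr
  · rw [hx]
    calc t / R * ‖z‖ < t / R * R := by gcongr
      _ = t := div_mul_cancel₀ t hR.ne'
      _ < 1 := hj.2
      _ ≤ 2 * √n := by linarith [Real.one_le_sqrt.2 hn']
  · calc (4 : ℝ) ^ (-(n : ℝ) - 1) < 1 / 4 := four_rpow_lt_quarter (by linarith)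
      _ < t := by linarith [hj.1]
  · rw [smul_smul, div_mul_div_cancel₀ ht.ne', div_self hR.ne', one_smul]
  · simpa using hz_lt

theorem volume_resonantSet_le {n : ℕ} (hn : 1 ≤ n) {σ R : ℝ} (hσ : 0 ≤ σ) (hR : 1 ≤ R)
    {Q : ℕ} (hQ : 0 < Q) (q₀ : ℕ) :
    volume (resonantSet n σ R Q q₀) ≤
      ENNReal.ofReal (q₀ * ((2 + 12 * √n) * (R / (2 * √n)) / Q) ^ n) := by
  have hsn : 0 < √(n : ℝ) := Real.sqrt_pos.2 (by exact_mod_cast hn)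
  have hR0 : 0 < R := one_pos.trans_le hR
  have hQ' : (1 : ℝ) ≤ Q := by exact_mod_cast hQ
  set c := (2 + 12 * √n) * (R / (2 * √n)) / Q
  have hline : ∀ q ∈ Finset.Icc 1 q₀,
      volume {s | s ∈ Ioo (R / (2 * √n)) (R / √n) ∧ ∃ m : ℤ, |q * (R ^ σ / R * s) - m| ≤ 1 / Q}
        ≤ ENNReal.ofReal c := fun q hq => by
    have hq : (1 : ℝ) ≤ q := by exact_mod_cast (Finset.mem_Icc.1 hq).1
    have hqRσ : 1 ≤ q * R ^ σ := one_le_mul_of_one_le_of_one_le hq (Real.one_le_rpow hR hσ)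
    simp only [← mul_assoc]
    refine (volume_setOf_mem_Ioo_abs_mul_sub_int_le (by positivity) (by positivity)
      (div_le_one_of_le₀ hQ' (by positivity)) (by gcongr; linarith)).trans
        (ENNReal.ofReal_le_ofReal ?_)
    have hα : 6 * (1 / Q) / (q * (R ^ σ / R)) ≤ 6 * (1 / Q) * R := by
      rw [div_le_iff₀ (by positivity), mul_assoc _ R,
        show R * (q * (R ^ σ / R)) = q * R ^ σ by field_simp]
      exact le_mul_of_one_le_right (by positivity) hqRσ
    have hc : c = 2 * (1 / Q) * (R / √n - R / (2 * √n)) + 6 * (1 / Q) * R := by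
      simp only [c]; field_simp; ring
    linarith
  calc volume (resonantSet n σ R Q q₀)
      ≤ ∑ q ∈ Finset.Icc 1 q₀, volume {s | s ∈ Ioo (R / (2 * √n)) (R / √n) ∧
          ∃ m : ℤ, |q * (R ^ σ / R * s) - m| ≤ 1 / Q} ^ n := by
        refine (measure_biUnion_finset_le _ _).trans_eq (Finset.sum_congr rfl fun q _ => ?_)
        simpa using EuclideanSpace.volume_setOf_forall_mem (ι := Fin n)
          {s | s ∈ Ioo (R / (2 * √n)) (R / √n) ∧ ∃ m : ℤ, |q * (R ^ σ / R * s) - m| ≤ 1 / Q}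
    _ ≤ ∑ _q ∈ Finset.Icc 1 q₀, ENNReal.ofReal c ^ n :=
        Finset.sum_le_sum fun q hq => by gcongr; exact hline q hq
    _ = ENNReal.ofReal (q₀ * c ^ n) := by
        rw [Finset.sum_const, Nat.card_Icc, nsmul_eq_mul, ENNReal.ofReal_mul (Nat.cast_nonneg _),
          ENNReal.ofReal_pow (by positivity)]
        simp

theorem setOf_forall_mem_Ioo_diff_resonantSet_subset {n : ℕ} (hn : 1 ≤ n) {σ ε₂ R : ℝ}
    (hR : 0 < R) {Q q₀ : ℕ} (hQ : 0 < Q) (hQJ : 2 * (Q : ℝ) ^ n < R ^ (1 - 2 * σ))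
    (hq₀ : ∀ q : ℕ, q₀ < q → (R ^ (1 - 2 * σ) / (2 * q) + 1) / Q < ε₂ / (√n * R ^ σ)) :
    {z : EuclideanSpace ℝ (Fin n) | ∀ i, z i ∈ Ioo (R / (2 * √n)) (R / √n)} \
        resonantSet n σ R Q q₀ ⊆
      scaledQuotient R (latticeNbhdAnnulus n σ ε₂ R) (latticeScales n σ R) ∩
        Metric.ball 0 R := by
  rintro z ⟨hz, hres⟩
  obtain ⟨q, hq, hqQ, hm⟩ := exists_nat_forall_abs_mul_sub_int_le (fun i => R ^ σ / R * z i) hQ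
  have hq₀q : q₀ < q := by
    by_contra! h
    exact hres (mem_biUnion (Finset.mem_Icc.2 ⟨hq, h⟩) fun i => ⟨hz i, hm i⟩)
  have h2q : 2 * (q : ℝ) < R ^ (1 - 2 * σ) := by
    rw [Fintype.card_fin] at hqQ
    exact lt_of_le_of_lt (by gcongr; exact_mod_cast hqQ) hQJ
  obtain ⟨j, hj, hjm⟩ := exists_nat_mem_Ioo_forall_abs_mul_sub_int_lt _ hq h2q hm (hq₀ q hq₀q)
  refine mem_scaledQuotient_inter_ball hn hR hz (j := j) ?_ (by simpa using hjm)
  have hJ : R ^ (2 * σ - 1) = (R ^ (1 - 2 * σ))⁻¹ := by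
    rw [← Real.rpow_neg hR.le]; ring_nf
  have hJ0 : 0 < R ^ (1 - 2 * σ) := Real.rpow_pos_of_pos hR _
  rw [hJ, Int.cast_natCast, inv_mul_eq_div]
  constructor
  · rw [lt_div_iff₀ hJ0]; linarith [hj.1]
  · rw [div_lt_one hJ0]; exact hj.2

theorem volume_scaledQuotient_inter_ball_ge {n : ℕ} (hn : 1 ≤ n) {σ ε₂ R : ℝ} (hσ : 0 ≤ σ)
    (hR : 1 ≤ R) {Q q₀ : ℕ} (hQ : 0 < Q) (hQJ : 2 * (Q : ℝ) ^ n < R ^ (1 - 2 * σ))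
    (hq₀ : ∀ q : ℕ, q₀ < q → (R ^ (1 - 2 * σ) / (2 * q) + 1) / Q < ε₂ / (√n * R ^ σ))
    (hres : q₀ * (2 + 12 * √n) ^ n ≤ (Q : ℝ) ^ n / 2) :
    ENNReal.ofReal ((R / (2 * √n)) ^ n / 2) ≤
      volume (scaledQuotient R (latticeNbhdAnnulus n σ ε₂ R) (latticeScales n σ R) ∩
        Metric.ball 0 R) := by
  have hsn : 0 < √(n : ℝ) := Real.sqrt_pos.2 (by exact_mod_cast hn)
  have hR0 : 0 < R := one_pos.trans_le hR
  set L := R / (2 * √n)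
  have hL : 0 < L := div_pos hR0 (by positivity)
  have hcube : volume {z : EuclideanSpace ℝ (Fin n) | ∀ i, z i ∈ Ioo L (R / √n)} =
      ENNReal.ofReal (L ^ n) := by
    have hlen : R / √n - L = L := by simp only [L]; field_simp; ring
    rw [EuclideanSpace.volume_setOf_forall_mem, Real.volume_Ioo, hlen, Fintype.card_fin,
      ENNReal.ofReal_pow hL.le]
  have hvol_res : volume (resonantSet n σ R Q q₀) ≤ ENNReal.ofReal (L ^ n / 2) := by
    refine (volume_resonantSet_le hn hσ hR hQ q₀).trans (ENNReal.ofReal_le_ofReal ?_)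
    have hQ0 : (0 : ℝ) < Q := by exact_mod_cast hQ
    rw [div_pow, mul_pow, mul_div_assoc', div_le_div_iff₀ (by positivity) (by norm_num)]
    calc q₀ * ((2 + 12 * √n) ^ n * L ^ n) * 2 = (q₀ * (2 + 12 * √n) ^ n) * 2 * L ^ n := by ring
      _ ≤ ((Q : ℝ) ^ n / 2) * 2 * L ^ n := by gcongr
      _ = L ^ n * Q ^ n := by ring
  calc ENNReal.ofReal (L ^ n / 2) = ENNReal.ofReal (L ^ n) - ENNReal.ofReal (L ^ n / 2) := by
        rw [← ENNReal.ofReal_sub _ (by positivity)]; ring_nf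
    _ ≤ volume {z : EuclideanSpace ℝ (Fin n) | ∀ i, z i ∈ Ioo L (R / √n)} -
          volume (resonantSet n σ R Q q₀) := by rw [hcube]; gcongr
    _ ≤ volume ({z : EuclideanSpace ℝ (Fin n) | ∀ i, z i ∈ Ioo L (R / √n)} \
          resonantSet n σ R Q q₀) := le_measure_sdiff
    _ ≤ _ := measure_mono
          (setOf_forall_mem_Ioo_diff_resonantSet_subset hn hR0 hQ hQJ hq₀)

/-- Measure amplification: with `X` the `ε₂/R`-neighborhood of the lattice
`R^{σ-1} ℤⁿ` intersected with the annulus `{4^{-n-2} < |x| < 2√n}`, and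
`T = R^{2σ-1} ℤ ∩ (4^{-n-1}, 1)`, for all sufficiently large `R` with `R^σ` a
positive integer, the set `XR/T = {xR/t : x ∈ X, t ∈ T}` occupies a positive
proportion of the ball `B(0,R)`: `|XR/T ∩ B(0,R)| ≥ c R^n`. -/
theorem measure_amplification (n : ℕ) (hn : 1 ≤ n) (σ : ℝ) (hσ0 : 0 < σ)
    (hσ : σ < 1 / (n + 2)) (ε₂ : ℝ) (hε₂ : 0 < ε₂) :
    ∃ c : ℝ, 0 < c ∧ ∃ R₀ : ℝ, ∀ R : ℝ, R₀ ≤ R →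
      (∃ m : ℕ, 0 < m ∧ R ^ σ = (m : ℝ)) →
      ENNReal.ofReal (c * R ^ (n : ℝ)) ≤
        MeasureTheory.volume
          ({z : EuclideanSpace ℝ (Fin n) |
              ∃ x ∈ {x : EuclideanSpace ℝ (Fin n) |
                (∃ m : Fin n → ℤ,
                  ‖x - (EuclideanSpace.equiv (Fin n) ℝ).symm (fun i => R ^ (σ - 1) * (m i : ℝ))‖
                    < ε₂ / R) ∧
                4 ^ (-(n : ℝ) - 2) < ‖x‖ ∧ ‖x‖ < 2 * Real.sqrt n},
              ∃ t ∈ {t : ℝ | (∃ j : ℤ, t = R ^ (2 * σ - 1) * (j : ℝ)) ∧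
                4 ^ (-(n : ℝ) - 1) < t ∧ t < 1},
              z = (R / t) • x} ∩ Metric.ball (0 : EuclideanSpace ℝ (Fin n)) R) := by
  have hn' : (0 : ℝ) < n := by exact_mod_cast hn
  set C := 2 + 12 * √n
  set β := (1 - 2 * σ) / n
  have hβ : σ < β := by
    rw [lt_div_iff₀ hn']; rw [lt_div_iff₀ (by positivity)] at hσ; linarith
  have hδP := tendsto_div_mul_rpow_mul_rpow_atTop hε₂ (Real.sqrt_pos.2 hn') hβ
  obtain ⟨R₀, hR₀⟩ := eventually_atTop.1 ((eventually_ge_atTop 1).and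
    (((tendsto_rpow_atTop (hσ0.trans hβ)).eventually_ge_atTop (32 * C)).and
      (hδP.eventually_ge_atTop (64 * 8 ^ n * C ^ n))))
  refine ⟨(1 / (2 * √n)) ^ n / 2, by positivity, R₀, fun R hR _ => ?_⟩
  obtain ⟨hR1, hP, hδ⟩ := hR₀ R hR
  have hJ : R ^ (1 - 2 * σ) = (R ^ β) ^ n := by
    rw [← Real.rpow_natCast, ← Real.rpow_mul (by linarith), div_mul_cancel₀ _ hn'.ne']
  obtain ⟨Q, q₀, hQ, hQJ, hq₀, hres⟩ :=
    exists_amplification_parameters hn (by linarith [Real.sqrt_nonneg n] : 1 ≤ C) hP hJ hδ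
  calc ENNReal.ofReal ((1 / (2 * √n)) ^ n / 2 * R ^ (n : ℝ))
      = ENNReal.ofReal ((R / (2 * √n)) ^ n / 2) := by
        rw [Real.rpow_natCast, div_pow, div_pow]; ring_nf
    _ ≤ _ := volume_scaledQuotient_inter_ball_ge hn hσ0.le hR1 hQ hQJ hq₀ hres
end
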